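/- Let z₁, …, zₙ ∈ (−1,1) be pairwise distinct, and for each j let Pⱼ = (xⱼ, yⱼ, zⱼ) and Rⱼ = (x′ⱼ, y′ⱼ, zⱼ) be points of S² having the same third coordinate zⱼ. Then there exist real polynomials p, q, r in one variable with r(t) ≠ 0 for all t ∈ [−1,1] and p(t)² + q(t)² = r(t)² for all t ∈ [−1,1], such that the associated twisting map φ(x,y,z) = ((p(z)x − q(z)y)/r(z), (q(z)x + p(z)y)/r(z), z) is a bijection of S² satisfying φ(Pⱼ) = Rⱼ for every j = 1, …, n. -/

import Mathlib

/-!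
Identify each horizontal plane with `ℂ` via `(x, y, z) ↦ x + iy`: the twisting map then multiplies
`x + iy` by the unit `(p(z) + i q(z)) / r(z)`, and the twisting map of `(p, -q, r)` undoes it.
Since `Rⱼ` and `Pⱼ` lie on the same horizontal circle, `Rⱼ` is obtained from `Pⱼ` by a unit `uⱼ`.
Every unit is the square of a unit other than `-1`, hence of the form `(1 + is)⁴ / (1 + s²)²` with
`s` real (half-angle substitution). Interpolating the parameters `sⱼ` at the heights `zⱼ` by a
polynomial `S`, the polynomials with `p + iq = (1 + iS)⁴` and `r = (1 + S²)²` do the job.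
-/

open Polynomial

/-- The unit sphere `S² = {(x,y,z) ∈ ℝ³ : x² + y² + z² = 1}`,
with points written as functions `Fin 3 → ℝ`. -/
def sphere2 : Set (Fin 3 → ℝ) := {v | v 0 ^ 2 + v 1 ^ 2 + v 2 ^ 2 = 1}

/-- The twisting map of `S²` associated to a triple `(p, q, r)` of real polynomials:
`(x, y, z) ↦ ((p(z)x − q(z)y)/r(z), (q(z)x + p(z)y)/r(z), z)`. -/
noncomputable def twist (p q r : Polynomial ℝ) (v : Fin 3 → ℝ) : Fin 3 → ℝ :=
  ![(p.eval (v 2) * v 0 - q.eval (v 2) * v 1) / r.eval (v 2),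
    (q.eval (v 2) * v 0 + p.eval (v 2) * v 1) / r.eval (v 2),
    v 2]

open Complex ComplexConjugate

def horizontalPart (v : Fin 3 → ℝ) : ℂ := ⟨v 0, v 1⟩

noncomputable def twistFactor (p q r : ℝ[X]) (t : ℝ) : ℂ := ⟨p.eval t, q.eval t⟩ / r.eval t

lemma ext_of_horizontalPart_eq {v w : Fin 3 → ℝ} (h : horizontalPart v = horizontalPart w)
    (h2 : v 2 = w 2) : v = w := by
  rw [horizontalPart, horizontalPart, Complex.mk.injEq] at h
  ext i; fin_cases i
  exacts [h.1, h.2, h2]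

lemma mem_sphere2_iff {v : Fin 3 → ℝ} :
    v ∈ sphere2 ↔ normSq (horizontalPart v) + v 2 ^ 2 = 1 := by
  rw [sphere2, Set.mem_ofPred_eq, horizontalPart, normSq_mk]; ring_nf

lemma twist_apply_two (p q r : ℝ[X]) (v : Fin 3 → ℝ) : twist p q r v 2 = v 2 := rfl

lemma horizontalPart_twist (p q r : ℝ[X]) (v : Fin 3 → ℝ) :
    horizontalPart (twist p q r v) = twistFactor p q r (v 2) * horizontalPart v := by
  apply Complex.ext <;>
    simp only [horizontalPart, twist, twistFactor, Matrix.cons_val_zero, Matrix.cons_val_one,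
      mul_re, mul_im, div_ofReal_re, div_ofReal_im] <;>
    ring

lemma normSq_twistFactor {p q r : ℝ[X]} {t : ℝ} (hr : r.eval t ≠ 0)
    (hpq : p.eval t ^ 2 + q.eval t ^ 2 = r.eval t ^ 2) : normSq (twistFactor p q r t) = 1 := by
  rw [twistFactor, normSq_div, normSq_mk, normSq_ofReal, div_eq_one_iff_eq (by simpa)]
  linear_combination hpq

lemma twistFactor_neg (p q r : ℝ[X]) (t : ℝ) :
    twistFactor p (-q) r t = conj (twistFactor p q r t) := by
  rw [twistFactor, twistFactor, map_div₀, conj_ofReal, eval_neg]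
  rfl

section TwistOnSphere

variable {p q r : ℝ[X]} {v : Fin 3 → ℝ}

lemma twist_mem_sphere2 (hr : r.eval (v 2) ≠ 0)
    (hpq : p.eval (v 2) ^ 2 + q.eval (v 2) ^ 2 = r.eval (v 2) ^ 2) (hv : v ∈ sphere2) :
    twist p q r v ∈ sphere2 := by
  rwa [mem_sphere2_iff, horizontalPart_twist, normSq_mul, normSq_twistFactor hr hpq, one_mul,
    twist_apply_two, ← mem_sphere2_iff]

lemma twist_neg_twist (hr : r.eval (v 2) ≠ 0)
    (hpq : p.eval (v 2) ^ 2 + q.eval (v 2) ^ 2 = r.eval (v 2) ^ 2) :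
    twist p (-q) r (twist p q r v) = v := by
  refine ext_of_horizontalPart_eq ?_ rfl
  rw [horizontalPart_twist, horizontalPart_twist, twist_apply_two, twistFactor_neg, ← mul_assoc,
    ← normSq_eq_conj_mul_self, normSq_twistFactor hr hpq, ofReal_one, one_mul]

lemma abs_le_one_of_mem_sphere2 (hv : v ∈ sphere2) : v 2 ∈ Set.Icc (-1 : ℝ) 1 := by
  rw [mem_sphere2_iff] at hv
  rw [Set.mem_Icc, ← abs_le, ← sq_le_one_iff_abs_le_one]
  linarith [normSq_nonneg (horizontalPart v)]

lemma twist_bijOn (hr : ∀ t ∈ Set.Icc (-1 : ℝ) 1, r.eval t ≠ 0)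
    (hpq : ∀ t ∈ Set.Icc (-1 : ℝ) 1, p.eval t ^ 2 + q.eval t ^ 2 = r.eval t ^ 2) :
    Set.BijOn (twist p q r) sphere2 sphere2 := by
  have hpq' : ∀ t ∈ Set.Icc (-1 : ℝ) 1, p.eval t ^ 2 + (-q).eval t ^ 2 = r.eval t ^ 2 := by
    simpa only [eval_neg, neg_sq] using hpq
  refine Set.InvOn.bijOn (f' := twist p (-q) r) ⟨fun v hv => ?_, fun v hv => ?_⟩
    (fun v hv => ?_) (fun v hv => ?_)
  all_goals have hv2 := abs_le_one_of_mem_sphere2 hv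
  · exact twist_neg_twist (hr _ hv2) (hpq _ hv2)
  · simpa only [neg_neg] using twist_neg_twist (hr _ hv2) (hpq' _ hv2)
  · exact twist_mem_sphere2 (hr _ hv2) (hpq _ hv2) hv
  · exact twist_mem_sphere2 (hr _ hv2) (hpq' _ hv2) hv

end TwistOnSphere

lemma exists_one_add_mul_I_sq_eq {v : ℂ} (hv : normSq v = 1) (hv1 : v ≠ -1) :
    ∃ s : ℝ, (1 + s * I) ^ 2 = (1 + s ^ 2) * v := by
  rw [normSq_apply] at hv
  have hc : 1 + v.re ≠ 0 := by
    intro hc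
    apply hv1
    apply Complex.ext <;> simp only [neg_re, one_re, neg_im, one_im, neg_zero] <;> nlinarith
  -- `s = tan (θ / 2)` for `v = exp (θ * I)`
  set s := v.im / (1 + v.re) with hs
  have hre : 1 - s ^ 2 = (1 + s ^ 2) * v.re := by
    rw [hs]; field_simp; linear_combination -(1 + v.re) * hv
  have him : 2 * s = (1 + s ^ 2) * v.im := by
    rw [hs]; field_simp; linear_combination -v.im * hv
  refine ⟨s, Complex.ext ?_ ?_⟩ <;>
    simp only [sq, mul_re, mul_im, add_re, add_im, one_re, one_im, ofReal_re, ofReal_im, I_re,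
      I_im, mul_zero, mul_one, zero_mul, one_mul, sub_self, add_zero, zero_add, sub_zero]
  · linear_combination hre
  · linear_combination him

lemma exists_one_add_mul_I_pow_four_eq {u : ℂ} (hu : normSq u = 1) :
    ∃ s : ℝ, (1 + s * I) ^ 4 = (1 + s ^ 2) ^ 2 * u := by
  obtain ⟨w, hw⟩ := IsAlgClosed.exists_pow_nat_eq u two_pos
  obtain ⟨v, hvu, hv1⟩ : ∃ v : ℂ, v ^ 2 = u ∧ v ≠ -1 := by
    by_cases hw1 : w = -1
    · exact ⟨1, by rw [← hw, hw1]; ring, by norm_num⟩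
    · exact ⟨w, hw, hw1⟩
  have hv : normSq v = 1 := by
    rwa [← pow_eq_one_iff_of_nonneg (normSq_nonneg v) two_ne_zero, ← map_pow, hvu]
  obtain ⟨s, hs⟩ := exists_one_add_mul_I_sq_eq hv hv1
  exact ⟨s, by rw [← hvu, show 4 = 2 * 2 from rfl, pow_mul, hs]; ring⟩

lemma exists_horizontalPart_eq_quartic_mul {v w : Fin 3 → ℝ} (hv : v ∈ sphere2)
    (hw : w ∈ sphere2) (h2 : v 2 = w 2) (hz : v 2 ∈ Set.Ioo (-1 : ℝ) 1) :
    ∃ s : ℝ, horizontalPart w = (1 + s * I) ^ 4 / (1 + s ^ 2) ^ 2 * horizontalPart v := by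
  rw [mem_sphere2_iff] at hv hw
  have hv0 : horizontalPart v ≠ 0 := by
    rw [← normSq_pos]; nlinarith [hz.1, hz.2]
  have hu : normSq (horizontalPart w / horizontalPart v) = 1 := by
    rw [normSq_div, div_eq_one_iff_eq (normSq_pos.mpr hv0).ne']
    rw [h2] at hv
    linarith
  obtain ⟨s, hs⟩ := exists_one_add_mul_I_pow_four_eq hu
  refine ⟨s, ?_⟩
  rw [hs, mul_div_cancel_left₀ _ (by norm_cast; positivity), div_mul_cancel₀ _ hv0]

lemma eval_quartic_sq_add_sq (S : ℝ[X]) (t : ℝ) :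
    ((1 - S ^ 2) ^ 2 - 4 * S ^ 2).eval t ^ 2 + (4 * S * (1 - S ^ 2)).eval t ^ 2 =
      ((1 + S ^ 2) ^ 2).eval t ^ 2 := by
  simp only [eval_sub, eval_add, eval_mul, eval_pow, eval_one, eval_ofNat]
  ring

lemma eval_quartic_ne_zero (S : ℝ[X]) (t : ℝ) : ((1 + S ^ 2) ^ 2).eval t ≠ 0 := by
  simp only [eval_add, eval_pow, eval_one]
  positivity

lemma twistFactor_quartic (S : ℝ[X]) (t : ℝ) :
    twistFactor ((1 - S ^ 2) ^ 2 - 4 * S ^ 2) (4 * S * (1 - S ^ 2)) ((1 + S ^ 2) ^ 2) t =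
      (1 + S.eval t * I) ^ 4 / (1 + S.eval t ^ 2) ^ 2 := by
  rw [twistFactor]
  push_cast [eval_sub, eval_add, eval_mul, eval_pow, eval_one, eval_ofNat]
  congr 1
  apply Complex.ext <;>
    simp only [pow_succ, pow_zero, mul_re, mul_im, add_re, add_im, one_re, one_im, ofReal_re,
      ofReal_im, I_re, I_im, mul_zero, mul_one, one_mul, sub_self, add_zero, zero_add] <;>
    ring

/-- given pairwise distinct `z₁, …, zₙ ∈ (−1,1)` and points
`Pⱼ = (xⱼ, yⱼ, zⱼ)`, `Rⱼ = (x′ⱼ, y′ⱼ, zⱼ)` of `S²` with the same third coordinate `zⱼ`,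
there are real polynomials `p, q, r` with `r` nonvanishing on `[−1,1]` and
`p² + q² = r²` on `[−1,1]`, whose associated twisting map is a bijection of `S²`
sending `Pⱼ` to `Rⱼ` for every `j`. -/
theorem stmt2 (n : ℕ) (z : Fin n → ℝ) (hz : ∀ j, z j ∈ Set.Ioo (-1 : ℝ) 1)
    (hzinj : Function.Injective z)
    (P R : Fin n → (Fin 3 → ℝ))
    (hP : ∀ j, P j ∈ sphere2) (hR : ∀ j, R j ∈ sphere2)
    (hPz : ∀ j, P j 2 = z j) (hRz : ∀ j, R j 2 = z j) :
    ∃ p q r : Polynomial ℝ,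
      (∀ t ∈ Set.Icc (-1 : ℝ) 1, r.eval t ≠ 0) ∧
      (∀ t ∈ Set.Icc (-1 : ℝ) 1, p.eval t ^ 2 + q.eval t ^ 2 = r.eval t ^ 2) ∧
      Set.BijOn (twist p q r) sphere2 sphere2 ∧
      ∀ j, twist p q r (P j) = R j := by
  choose s hs using fun j => exists_horizontalPart_eq_quartic_mul (hP j) (hR j)
    ((hPz j).trans (hRz j).symm) ((hPz j).symm ▸ hz j)
  obtain ⟨S, hS⟩ : ∃ S : ℝ[X], ∀ j, S.eval (z j) = s j :=
    ⟨Lagrange.interpolate Finset.univ z s, fun j =>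
      Lagrange.eval_interpolate_at_node s hzinj.injOn (Finset.mem_univ j)⟩
  have hr : ∀ t ∈ Set.Icc (-1 : ℝ) 1, ((1 + S ^ 2) ^ 2).eval t ≠ 0 := fun t _ =>
    eval_quartic_ne_zero S t
  have hpq : ∀ t ∈ Set.Icc (-1 : ℝ) 1, ((1 - S ^ 2) ^ 2 - 4 * S ^ 2).eval t ^ 2 +
      (4 * S * (1 - S ^ 2)).eval t ^ 2 = ((1 + S ^ 2) ^ 2).eval t ^ 2 := fun t _ =>
    eval_quartic_sq_add_sq S t
  refine ⟨_, _, _, hr, hpq, twist_bijOn hr hpq, fun j => ?_⟩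
  refine ext_of_horizontalPart_eq ?_ ((hPz j).trans (hRz j).symm)
  rw [horizontalPart_twist, twistFactor_quartic, hPz j, hS j, hs j]
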